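/- A regular language L ⊆ Γ^∞ is open in the alphabetic topology if and only if for all linked pairs (s,e) and (t,f) of M = Synt(L) with t, f ∈ M_e: [s][e]^ω ⊆ L implies [st][f]^ω ⊆ L. -/

import Mathlib

namespace InfWords

variable {Γ : Type}

/-- Finite and infinite words over `Γ`: `Γ^∞ = Γ* ∪ Γ^ω`. -/
abbrev Word (Γ : Type) := List Γ ⊕ (ℕ → Γ)

/-- Prepend a finite word to a finite or infinite word. -/
def wappend (u : List Γ) : Word Γ → Word Γ
  | Sum.inl v => Sum.inl (u ++ v)
  | Sum.inr f => Sum.inr fun n => if h : n < u.length then u.get ⟨n, h⟩ else f (n - u.length)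

/-- The set of finite words `Γ*` inside `Γ^∞`. -/
def finWords (Γ : Type) : Set (Word Γ) := Set.range Sum.inl

/-- The set of infinite words `Γ^ω` inside `Γ^∞`. -/
def infWords (Γ : Type) : Set (Word Γ) := Set.range Sum.inr

/-- The alphabet of a word: the letters occurring in it. -/
def alph : Word Γ → Set Γ
  | Sum.inl u => {a | a ∈ u}
  | Sum.inr f => {a | ∃ n, f n = a}

/-- The imaginary part: letters occurring infinitely often. -/
def im : Word Γ → Set Γ
  | Sum.inl _ => ∅
  | Sum.inr f => {a | ∀ n, ∃ m, n ≤ m ∧ f m = a}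

/-- `A^∞`: words all of whose letters lie in `A`. -/
def infin (A : Set Γ) : Set (Word Γ) := {α | alph α ⊆ A}

/-- The basic set `u A^∞` of the alphabetic topology. -/
def cone (u : List Γ) (A : Set Γ) : Set (Word Γ) := wappend u '' infin A

/-- The alphabetic topology on `Γ^∞`, generated by the sets `u A^∞`. -/
instance alphTop : TopologicalSpace (Word Γ) :=
  TopologicalSpace.generateFrom {S | ∃ u A, S = cone u A}

/-- `cpx A`: words with `alph = im = A`. -/
def cpx (A : Set Γ) : Set (Word Γ) := {β | alph β = A ∧ im β = A}

/-- The strict alphabetic topology, generated by the sets `u · cpx A`. -/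
def strictTopo (Γ : Type) : TopologicalSpace (Word Γ) :=
  TopologicalSpace.generateFrom {S | ∃ u A, S = wappend u '' cpx A}

/-- `u` is a finite prefix of the word `α`. -/
def IsPre (u : List Γ) : Word Γ → Prop
  | Sum.inl v => u <+: v
  | Sum.inr f => ∀ i : Fin u.length, u.get i = f i.1

/-- The arrow language `→W`: every prefix extends to a prefix lying in `W`. -/
def arrow (W : Set (List Γ)) : Set (Word Γ) :=
  {α | ∀ u, IsPre u α → ∃ v, IsPre (u ++ v) α ∧ u ++ v ∈ W}

/-- The right quotient `L / A^∞`. -/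
def quotInf (L : Set (Word Γ)) (A : Set Γ) : Set (List Γ) :=
  {u | ∃ β ∈ infin A, wappend u β ∈ L}

/-- `A^im`: words whose set of letters occurring infinitely often is exactly `A`. -/
def imSet (A : Set Γ) : Set (Word Γ) := {α | im α = A}

/-- `z^ω`, with the convention `1^ω = 1`. -/
def omegaPow : List Γ → Word Γ
  | [] => Sum.inl []
  | a :: l => Sum.inr fun n => (a :: l).get ⟨n % (a :: l).length, Nat.mod_lt n (Nat.succ_pos _)⟩

/-- The partial products `u v₀ v₁ ⋯ v_{n-1}`. -/
def partialProd (u : List Γ) (v : ℕ → List Γ) (n : ℕ) : List Γ :=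
  u ++ ((List.range n).map v).flatten

/-- `α` is the (finite or infinite) product `u v₀ v₁ v₂ ⋯`, with convention `1^ω = 1`. -/
def IsInfProd (u : List Γ) (v : ℕ → List Γ) : Word Γ → Prop
  | Sum.inl w => (∀ n, partialProd u v n <+: w) ∧ ∃ n, partialProd u v n = w
  | Sum.inr f => (∀ n, IsPre (partialProd u v n) (Sum.inr f)) ∧
      ∀ k, ∃ n, k < (partialProd u v n).length

/-- `h : Γ* → M` is a monoid homomorphism. -/
structure IsHom {M : Type} [Monoid M] (h : List Γ → M) : Prop where
  map_one : h [] = 1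
  map_mul : ∀ u v, h (u ++ v) = h u * h v

/-- `[s][e]^ω`: products `u v₀ v₁ ⋯` with `h u = s` and `h vᵢ = e`. -/
def pairSet {M : Type} (h : List Γ → M) (s e : M) : Set (Word Γ) :=
  {α | ∃ u v, h u = s ∧ (∀ i, h (v i) = e) ∧ IsInfProd u v α}

/-- `(s, e)` is a linked pair. -/
def LinkedPair {M : Type} [Monoid M] (s e : M) : Prop := s * e = s ∧ e * e = e

/-- `h` strongly recognizes `L`. -/
def StronglyRecognizes {M : Type} [Monoid M] (h : List Γ → M) (L : Set (Word Γ)) : Prop :=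
  L = ⋃ (s : M) (e : M) (_ : LinkedPair s e ∧ (pairSet h s e ∩ L).Nonempty), pairSet h s e

/-- `L` is regular: strongly recognized by a surjective homomorphism onto a finite monoid. -/
def Regular (L : Set (Word Γ)) : Prop :=
  ∃ (M : Type) (i : Monoid M), Finite M ∧
    ∃ h : List Γ → M, @IsHom Γ M i h ∧ Function.Surjective h ∧ @StronglyRecognizes Γ M i h L

/-- `L` is deterministic. -/
def Deterministic (L : Set (Word Γ)) : Prop :=
  Regular L ∧ ∃ W : Set (List Γ), L ∩ infWords Γ = arrow W ∩ infWords Γ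

/-- The syntactic preorder `u ≤_L v`. -/
def synLe (L : Set (Word Γ)) (u v : List Γ) : Prop :=
  ∀ x y z : List Γ,
    (wappend (x ++ v ++ y) (omegaPow z) ∈ L → wappend (x ++ u ++ y) (omegaPow z) ∈ L) ∧
    (wappend x (omegaPow (v ++ y)) ∈ L → wappend x (omegaPow (u ++ y)) ∈ L)

/-- The syntactic congruence `u ≡_L v`. -/
def synEq (L : Set (Word Γ)) (u v : List Γ) : Prop := synLe L u v ∧ synLe L v u

/-- `[s][e]^ω` for syntactic classes represented by words `s`, `e`. -/
def pairSetSyn (L : Set (Word Γ)) (s e : List Γ) : Set (Word Γ) :=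
  {α | ∃ u v, synEq L u s ∧ (∀ i, synEq L (v i) e) ∧ IsInfProd u v α}

/-- `s` represents an element of `M_e` in the syntactic monoid of `L`:
`s` is a product of words each of which is a factor of (something equivalent to) `e`. -/
def InMe (L : Set (Word Γ)) (e s : List Γ) : Prop :=
  ∃ parts : List (List Γ), s = parts.flatten ∧ ∀ p ∈ parts, ∃ x y, synEq L (x ++ p ++ y) e

/-- Glue a factorization `u₁ a₁ u₂ a₂ ⋯ u_k a_k` into a single finite word. -/
def glue : List (List Γ) → List (Set Γ × Γ) → List Γ
  | x :: xs, p :: l => x ++ p.2 :: glue xs l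
  | _, _ => []

/-- `(us, β)` is a factorization of `α` as `u₁ a₁ ⋯ u_k a_k β` with `uᵢ ∈ Aᵢ*`, `β ∈ B^∞`. -/
def IsFactorization (l : List (Set Γ × Γ)) (B : Set Γ) (us : List (List Γ)) (β : Word Γ)
    (α : Word Γ) : Prop :=
  us.length = l.length ∧
  (∀ (i : ℕ) (h1 : i < us.length) (h2 : i < l.length),
    ∀ c ∈ us.get ⟨i, h1⟩, c ∈ (l.get ⟨i, h2⟩).1) ∧
  β ∈ infin B ∧ α = wappend (glue us l) β

/-- The monomial `A₁* a₁ ⋯ A_k* a_k B^∞`. -/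
def monomial (l : List (Set Γ × Γ)) (B : Set Γ) : Set (Word Γ) :=
  {α | ∃ us β, IsFactorization l B us β α}

/-- The monomial given by `(l, B)` is unambiguous. -/
def Unambiguous (l : List (Set Γ × Γ)) (B : Set Γ) : Prop :=
  ∀ α us β us' β', IsFactorization l B us β α → IsFactorization l B us' β' α →
    us = us' ∧ β = β'

/-- `L` is a polynomial: a finite union of monomials. -/
def IsPolynomial (L : Set (Word Γ)) : Prop :=
  ∃ ms : List (List (Set Γ × Γ) × Set Γ), L = {α | ∃ m ∈ ms, α ∈ monomial m.1 m.2}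

/-- The set of marker letters of a monomial. -/
def sndSet (l : List (Set Γ × Γ)) : Set Γ := {a | ∃ p ∈ l, p.2 = a}

/-- `M_e`: the submonoid generated by the factors of the idempotent `e`. -/
def Msub {M : Type} [Monoid M] (e : M) : Submonoid M :=
  Submonoid.closure {t | ∃ x y, x * t * y = e}

/-- The variety `DA`: `ese = e` for all idempotents `e` and all `s ∈ M_e`. -/
def IsDA (M : Type) [Monoid M] : Prop :=
  ∀ e : M, e * e = e → ∀ s ∈ Msub e, e * s * e = e

end InfWords

/-!
By Ramsey's theorem every factorization `u v₀ v₁ ⋯` of a word can be regrouped as `x y₀ y₁ ⋯`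
where all blocks `yᵢ` have the same idempotent image `e` under the recognizing morphism `h`, and
`h x * e = h x`. Hence whether an infinite product lies in `L` depends only on the images of its
factors, and a syntactic set `[s][e]^ω` that meets `L` is contained in `L`.

If `L` is open and `t, f ∈ M_e`, there is a word `z ≡ e` containing every letter of `t` and `f`.
A basic neighborhood `w A^∞ ⊆ L` of `s z^ω ∈ [s][e]^ω` then contains `s zⁿ t f^ω ∈ [st][f]^ω`
for large `n`, so `[st][f]^ω` meets `L`.

Conversely, write `α ∈ L` as `u v₀ v₁ ⋯` with `(h u, h vᵢ)` a linked pair, so that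
`[u][v₀]^ω ⊆ L`, and let `A` be the set of letters of the `vᵢ`. Every word over `A` lies in
`M_{v₀}`; Ramsey-factorizing `γ ∈ A^∞` as `t f₀ f₁ ⋯` with `fᵢ ≡ f₀` and applying the hypothesis
gives `uγ ∈ [ut][f₀]^ω ⊆ L`. So `u A^∞` is a neighborhood of `α` inside `L`.
-/

open Filter in
theorem exists_strictMono_forall_lt_eq {C : Type*} [Finite C] (c : ℕ → ℕ → C) :
    ∃ φ : ℕ → ℕ, StrictMono φ ∧ ∃ q, ∀ i j, i < j → c (φ i) (φ j) = q := by
  -- color `i` by the color `d i` that `c i j` takes for ultrafilter-almost all `j`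
  let U := hyperfilter ℕ
  have hcol : ∀ i, ∃ d, ∀ᶠ j in U, c i j = d := fun i =>
    Ultrafilter.eventually_exists_iff.mp (.of_forall fun j => ⟨c i j, rfl⟩)
  choose d hd using hcol
  obtain ⟨q, hq⟩ : ∃ q, ∀ᶠ i in U, d i = q :=
    Ultrafilter.eventually_exists_iff.mp (.of_forall fun i => ⟨d i, rfl⟩)
  have hnext : ∀ i, ∃ j, i < j ∧ d j = q ∧ ∀ k ∈ Set.Iic i, c k j = d k := fun i =>
    (Eventually.and (Nat.hyperfilter_le_atTop (eventually_gt_atTop i))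
      (hq.and ((Set.finite_Iic i).eventually_all.mpr fun k _ => hd k))).exists
  choose next hlt hnq hnc using hnext
  have hsucc : ∀ n, next^[n + 2] 0 = next (next^[n + 1] 0) := fun n =>
    Function.iterate_succ_apply' next (n + 1) 0
  have hφ : StrictMono fun n => next^[n + 1] 0 :=
    strictMono_nat_of_lt_succ fun n => (hsucc n).symm ▸ hlt _
  refine ⟨_, hφ, q, fun i j hij => ?_⟩
  obtain ⟨j, rfl⟩ : ∃ j', j = j' + 1 := ⟨j - 1, by omega⟩
  have hi : next^[i + 1] 0 = next (next^[i] 0) := Function.iterate_succ_apply' next i 0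
  rw [hsucc, hnc _ _ (hφ.monotone (Nat.lt_succ_iff.mp hij)), hi, hnq]

namespace InfWords

variable {Γ : Type}

lemma wappend_inr (u : List Γ) (f : ℕ → Γ) :
    wappend u (Sum.inr f) =
      Sum.inr fun n => if h : n < u.length then u.get ⟨n, h⟩ else f (n - u.length) := rfl

@[simp] lemma wappend_nil (α : Word Γ) : wappend [] α = α := by
  cases α <;> simp [wappend]

lemma wappend_assoc (u v : List Γ) (α : Word Γ) :
    wappend (u ++ v) α = wappend u (wappend v α) := by
  cases α with
  | inl w => simp [wappend]
  | inr f =>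
    simp only [wappend_inr, Sum.inr.injEq]
    funext n
    rcases Nat.lt_or_ge n u.length with h1 | h1
    · rw [dif_pos (by simp; omega), dif_pos h1]
      simp [List.getElem_append_left h1]
    rcases Nat.lt_or_ge n (u.length + v.length) with h2 | h2
    · rw [dif_pos (by simp; omega), dif_neg (by omega), dif_pos (by omega)]
      simp [List.getElem_append_right h1]
    · rw [dif_neg (by simp; omega), dif_neg (by omega), dif_neg (by omega)]
      congr 1
      simp only [List.length_append]
      omega

lemma wappend_injective (w : List Γ) : Function.Injective (wappend w) := by
  intro α β h
  cases α <;> cases β <;> simp only [wappend, Sum.inl.injEq, Sum.inr.injEq, reduceCtorEq,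
    List.append_cancel_left_eq] at h ⊢
  · exact h
  · funext n
    simpa using congrFun h (n + w.length)

lemma alph_wappend (u : List Γ) (α : Word Γ) :
    alph (wappend u α) = {a | a ∈ u} ∪ alph α := by
  cases α with
  | inl w => ext a; simp [wappend, alph]
  | inr f =>
    ext a
    simp only [wappend_inr, alph, Set.mem_ofPred_eq, Set.mem_union]
    constructor
    · rintro ⟨n, hn⟩
      split at hn
      · exact .inl (hn ▸ List.get_mem _ _)
      · exact .inr ⟨_, hn⟩
    · rintro (ha | ⟨n, rfl⟩)
      · obtain ⟨i, rfl⟩ := List.get_of_mem ha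
        exact ⟨i, by simp⟩
      · exact ⟨n + u.length, by simp⟩

lemma isPre_iff_exists_wappend {u : List Γ} {α : Word Γ} :
    IsPre u α ↔ ∃ γ, α = wappend u γ := by
  cases α with
  | inl v =>
    constructor
    · rintro ⟨r, rfl⟩
      exact ⟨.inl r, rfl⟩
    · rintro ⟨γ | g, h⟩
      · exact ⟨γ, (Sum.inl.inj h).symm⟩
      · exact absurd h (by simp [wappend])
  | inr f =>
    constructor
    · intro hp
      refine ⟨.inr fun n => f (n + u.length), congrArg Sum.inr (funext fun n => ?_)⟩
      split
      · exact (hp ⟨n, ‹_›⟩).symm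
      · congr 1; omega
    · rintro ⟨γ | g, h⟩ i
      · exact absurd h (by simp [wappend])
      · simp [wappend_inr] at h
        simp [h]

lemma isPre_wappend (u : List Γ) (γ : Word Γ) : IsPre u (wappend u γ) :=
  isPre_iff_exists_wappend.mpr ⟨γ, rfl⟩

lemma isPre_wappend_append_iff {w u : List Γ} {α : Word Γ} :
    IsPre (w ++ u) (wappend w α) ↔ IsPre u α := by
  simp only [isPre_iff_exists_wappend, wappend_assoc, (wappend_injective w).eq_iff]

lemma IsPre.prefix_of_length_le {w P : List Γ} {α : Word Γ} (hw : IsPre w α) (hP : IsPre P α)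
    (hle : w.length ≤ P.length) : w <+: P := by
  cases α with
  | inl v => exact List.prefix_of_prefix_length_le hw hP hle
  | inr f =>
    refine ⟨P.drop w.length, List.ext_getElem (by simp; omega) fun n hn _ => ?_⟩
    rcases Nat.lt_or_ge n w.length with h | h
    · rw [List.getElem_append_left h]
      exact (hw ⟨n, h⟩).trans (hP ⟨n, by omega⟩).symm
    · simp [List.getElem_append_right h, show w.length + (n - w.length) = n by omega]

lemma wappend_cancel {w₁ w₂ : List Γ} {γ₁ γ₂ : Word Γ}
    (h : wappend w₁ γ₁ = wappend w₂ γ₂) (hle : w₁.length ≤ w₂.length) :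
    ∃ d, w₂ = w₁ ++ d ∧ γ₁ = wappend d γ₂ := by
  obtain ⟨d, rfl⟩ := (isPre_wappend w₁ γ₁).prefix_of_length_le (h ▸ isPre_wappend w₂ γ₂) hle
  exact ⟨d, rfl, wappend_injective w₁ (by rwa [← wappend_assoc])⟩

lemma inr_eq_of_forall_isPre {f g : ℕ → Γ}
    (h : ∀ k, ∃ w : List Γ, k < w.length ∧ IsPre w (.inr f) ∧ IsPre w (.inr g)) :
    (.inr f : Word Γ) = .inr g := by
  refine congrArg Sum.inr (funext fun n => ?_)
  obtain ⟨w, hn, hf, hg⟩ := h n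
  exact (hf ⟨n, hn⟩).symm.trans (hg ⟨n, hn⟩)

lemma wappend_omegaPow_self (z : List Γ) : wappend z (omegaPow z) = omegaPow z := by
  rcases z with _ | ⟨a, l⟩
  · rfl
  simp only [omegaPow, wappend_inr, Sum.inr.injEq]
  funext n
  split <;> rename_i h <;> simp only [List.length_cons] at h
  · simp [Nat.mod_eq_of_lt h]
  · simp [Nat.mod_eq_sub_mod (Nat.le_of_not_lt h)]

lemma wappend_flatten_replicate {z : List Γ} {β : Word Γ} (h : wappend z β = β) (n : ℕ) :
    wappend (List.replicate n z).flatten β = β := by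
  induction n with
  | zero => simp
  | succ n ih => rw [List.replicate_succ, List.flatten_cons, wappend_assoc, ih, h]

lemma eq_omegaPow_of_wappend_eq {z : List Γ} (hz : z ≠ []) {β : Word Γ}
    (h : wappend z β = β) : β = omegaPow z := by
  obtain ⟨a, l, rfl⟩ := List.exists_cons_of_ne_nil hz
  cases β with
  | inl x =>
    have := congrArg (Sum.elim List.length fun _ => 0) h
    simp [wappend] at this
    omega
  | inr g =>
    refine inr_eq_of_forall_isPre fun k =>
      ⟨(List.replicate (k + 1) (a :: l)).flatten, ?_, ?_, ?_⟩
    · simp [List.length_flatten]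
      nlinarith
    · rw [← wappend_flatten_replicate h (k + 1)]
      exact isPre_wappend _ _
    · show IsPre _ (omegaPow (a :: l))
      rw [← wappend_flatten_replicate (wappend_omegaPow_self _) (k + 1)]
      exact isPre_wappend _ _

lemma wappend_omegaPow_append (u y : List Γ) :
    wappend u (omegaPow (y ++ u)) = omegaPow (u ++ y) := by
  rcases eq_or_ne (u ++ y) [] with h | h
  · obtain ⟨rfl, rfl⟩ := List.append_eq_nil_iff.mp h
    rfl
  refine eq_omegaPow_of_wappend_eq h ?_
  rw [wappend_assoc, ← wappend_assoc y, wappend_omegaPow_self]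

lemma alph_omegaPow_subset (z : List Γ) : alph (omegaPow z) ⊆ {c | c ∈ z} := by
  rcases z with _ | ⟨a, l⟩
  · simp [omegaPow, alph]
  · rintro _ ⟨n, rfl⟩
    exact List.get_mem _ _

def block (v : ℕ → List Γ) (i j : ℕ) : List Γ := ((List.range' i (j - i)).map v).flatten

lemma block_append (v : ℕ → List Γ) {i j k : ℕ} (hij : i ≤ j) (hjk : j ≤ k) :
    block v i j ++ block v j k = block v i k := by
  have h := List.range'_append (s := i) (m := j - i) (n := k - j) (step := 1)
  simp only [one_mul, show i + (j - i) = j by omega, show j - i + (k - j) = k - i by omega] at h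
  rw [block, block, block, ← List.flatten_append, ← List.map_append, h]

lemma exists_mem_of_mem_block {v : ℕ → List Γ} {i j : ℕ} {c : Γ} (hc : c ∈ block v i j) :
    ∃ k, c ∈ v k := by
  simp only [block, List.mem_flatten, List.mem_map] at hc
  obtain ⟨_, ⟨k, -, rfl⟩, hk⟩ := hc
  exact ⟨k, hk⟩

lemma partialProd_eq_append_block (u : List Γ) (v : ℕ → List Γ) (n : ℕ) :
    partialProd u v n = u ++ block v 0 n := by
  simp [partialProd, block, List.range_eq_range']

@[simp] lemma partialProd_zero (u : List Γ) (v : ℕ → List Γ) : partialProd u v 0 = u := by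
  simp [partialProd]

lemma partialProd_succ (u : List Γ) (v : ℕ → List Γ) (n : ℕ) :
    partialProd u v (n + 1) = partialProd u v n ++ v n := by
  simp [partialProd, List.range_succ]

lemma partialProd_append_block (u : List Γ) (v : ℕ → List Γ) {i j : ℕ} (hij : i ≤ j) :
    partialProd u v i ++ block v i j = partialProd u v j := by
  rw [partialProd_eq_append_block, partialProd_eq_append_block, List.append_assoc,
    block_append v (Nat.zero_le i) hij]

lemma partialProd_prefix (u : List Γ) (v : ℕ → List Γ) {i j : ℕ} (hij : i ≤ j) :
    partialProd u v i <+: partialProd u v j :=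
  ⟨_, partialProd_append_block u v hij⟩

section IsInfProd

variable {u : List Γ} {v : ℕ → List Γ} {α : Word Γ}

lemma IsInfProd.isPre (hα : IsInfProd u v α) (n : ℕ) : IsPre (partialProd u v n) α := by
  cases α <;> exact hα.1 n

lemma isInfProd_append_wappend_iff {w : List Γ} :
    IsInfProd (w ++ u) v (wappend w α) ↔ IsInfProd u v α := by
  have hpp (n : ℕ) : partialProd (w ++ u) v n = w ++ partialProd u v n := by simp [partialProd]
  cases α with
  | inl x =>
    simp only [wappend, IsInfProd, hpp, List.prefix_append_right_inj, List.append_cancel_left_eq]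
  | inr f =>
    obtain ⟨g, hg⟩ : ∃ g, wappend w (.inr f) = .inr g := ⟨_, wappend_inr w f⟩
    simp only [hg, IsInfProd, hpp, List.length_append]
    rw [← hg]
    simp only [isPre_wappend_append_iff]
    refine and_congr_right fun _ => ⟨fun h k => ?_, fun h k => ?_⟩
    · obtain ⟨n, hn⟩ := h (w.length + k)
      exact ⟨n, by omega⟩
    · obtain ⟨n, hn⟩ := h k
      exact ⟨n, by omega⟩

lemma IsInfProd.prepend {w : List Γ} (hα : IsInfProd u v α) :
    IsInfProd (w ++ u) v (wappend w α) :=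
  isInfProd_append_wappend_iff.mpr hα

lemma IsInfProd.exists_eq_wappend (hα : IsInfProd u v α) :
    ∃ γ, α = wappend u γ ∧ IsInfProd [] v γ := by
  obtain ⟨γ, rfl⟩ := isPre_iff_exists_wappend.mp (partialProd_zero u v ▸ hα.isPre 0)
  exact ⟨γ, rfl, isInfProd_append_wappend_iff.mp (by simpa using hα)⟩

lemma IsInfProd.alph_subset (hα : IsInfProd u v α) :
    alph α ⊆ ⋃ n, {c | c ∈ partialProd u v n} := by
  cases α with
  | inl w =>
    obtain ⟨n, rfl⟩ := hα.2
    exact fun c hc => Set.mem_iUnion.mpr ⟨n, hc⟩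
  | inr f =>
    rintro _ ⟨k, rfl⟩
    obtain ⟨n, hn⟩ := hα.2 k
    exact Set.mem_iUnion.mpr ⟨n, hα.1 n ⟨k, hn⟩ ▸ List.get_mem _ _⟩

lemma IsInfProd.regroup (hα : IsInfProd u v α) {φ : ℕ → ℕ} (hφ : StrictMono φ) :
    IsInfProd (partialProd u v (φ 0)) (fun j => block v (φ j) (φ (j + 1))) α := by
  have hpp (n : ℕ) : partialProd (partialProd u v (φ 0)) (fun j => block v (φ j) (φ (j + 1))) n =
      partialProd u v (φ n) := by
    induction n with
    | zero => simp
    | succ n ih => rw [partialProd_succ, ih, partialProd_append_block u v (hφ.monotone n.le_succ)]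
  cases α with
  | inl w =>
    obtain ⟨hpre, m, hm⟩ := hα
    refine ⟨fun n => hpp n ▸ hpre _, m, ?_⟩
    rw [hpp]
    exact (hpre (φ m)).eq_of_length (le_antisymm (hpre (φ m)).length_le
      (hm ▸ (partialProd_prefix u v (hφ.id_le m)).length_le))
  | inr f =>
    refine ⟨fun n => hpp n ▸ hα.1 _, fun k => ?_⟩
    obtain ⟨n, hn⟩ := hα.2 k
    exact ⟨n, hpp n ▸ hn.trans_le (partialProd_prefix u v (hφ.id_le n)).length_le⟩

end IsInfProd

lemma isInfProd_omegaPow (u z : List Γ) :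
    IsInfProd u (fun _ => z) (wappend u (omegaPow z)) := by
  have hpp (n : ℕ) : partialProd u (fun _ => z) n = u ++ (List.replicate n z).flatten := by
    simp [partialProd, List.map_const']
  rcases z with _ | ⟨a, l⟩
  · simp [omegaPow, wappend, IsInfProd, hpp]
  have hpre (n : ℕ) :
      IsPre (partialProd u (fun _ => a :: l) n) (wappend u (omegaPow (a :: l))) := by
    rw [hpp, ← wappend_flatten_replicate (wappend_omegaPow_self _) n, ← wappend_assoc]
    exact isPre_wappend _ _
  obtain ⟨g, hg⟩ : ∃ g, wappend u (omegaPow (a :: l)) = .inr g := ⟨_, wappend_inr _ _⟩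
  rw [hg] at hpre ⊢
  refine ⟨hpre, fun k => ⟨k + 1, ?_⟩⟩
  have : k + 1 ≤ (k + 1) * (l.length + 1) := Nat.le_mul_of_pos_right _ (by omega)
  simp [hpp, List.length_flatten]
  omega

def letterSeq : Word Γ → ℕ → List Γ
  | .inl w => fun i => w[i]?.toList
  | .inr f => fun i => [f i]

lemma isInfProd_letterSeq (α : Word Γ) : IsInfProd [] (letterSeq α) α := by
  cases α with
  | inl w =>
    have hpp (n : ℕ) : partialProd [] (letterSeq (.inl w)) n = w.take n := by
      induction n with
      | zero => simp
      | succ n ih => rw [partialProd_succ, ih, List.take_add_one]; rfl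
    exact ⟨fun n => hpp n ▸ List.take_prefix n w, w.length, by rw [hpp, List.take_length]⟩
  | inr f =>
    have hpp (n : ℕ) : partialProd [] (letterSeq (.inr f)) n = (List.range n).map f := by
      induction n with
      | zero => simp
      | succ n ih => rw [partialProd_succ, ih, List.range_succ, List.map_append]; rfl
    exact ⟨fun n i => by simp [hpp], fun k => ⟨k + 1, by simp [hpp]⟩⟩

lemma mem_alph_of_mem_letterSeq {α : Word Γ} {i : ℕ} {c : Γ} (hc : c ∈ letterSeq α i) :
    c ∈ alph α := by
  cases α with
  | inl w => exact List.mem_of_getElem? (Option.mem_toList.mp hc)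
  | inr f => exact ⟨i, (List.mem_singleton.mp hc).symm⟩

lemma cone_mono {w : List Γ} {A B : Set Γ} (hAB : A ⊆ B) : cone w A ⊆ cone w B :=
  Set.image_mono fun _ hα => hα.trans hAB

lemma cone_subset_of_wappend_mem {w P : List Γ} {A : Set Γ} {γ : Word Γ}
    (hγ : wappend P γ ∈ cone w A) (hle : w.length ≤ P.length) :
    γ ∈ infin A ∧ cone P A ⊆ cone w A := by
  obtain ⟨γ₁, hγ₁, hβ⟩ := hγ
  obtain ⟨d, rfl, rfl⟩ := wappend_cancel hβ hle
  have hA : {a | a ∈ d} ∪ alph γ ⊆ A := alph_wappend d γ ▸ hγ₁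
  refine ⟨fun a ha => hA (.inr ha), ?_⟩
  rintro _ ⟨δ, hδ, rfl⟩
  refine ⟨wappend d δ, ?_, (wappend_assoc w d δ).symm⟩
  show alph _ ⊆ A
  rw [alph_wappend]
  exact Set.union_subset (fun a ha => hA (.inl ha)) hδ

lemma isTopologicalBasis_cone :
    TopologicalSpace.IsTopologicalBasis {S : Set (Word Γ) | ∃ u A, S = cone u A} where
  exists_subset_inter := by
    rintro _ ⟨w₁, A₁, rfl⟩ _ ⟨w₂, A₂, rfl⟩ β ⟨h₁, h₂⟩
    wlog hle : w₁.length ≤ w₂.length generalizing w₁ w₂ A₁ A₂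
    · obtain ⟨S, hS, hβ, hsub⟩ := this w₂ A₂ w₁ A₁ h₂ h₁ (by omega)
      exact ⟨S, hS, hβ, hsub.trans (Set.inter_comm _ _).subset⟩
    obtain ⟨γ, hγ, rfl⟩ := h₂
    obtain ⟨hγ₁, hsub⟩ := cone_subset_of_wappend_mem h₁ hle
    exact ⟨cone w₂ (A₁ ∩ A₂), ⟨_, _, rfl⟩, ⟨γ, Set.subset_inter hγ₁ hγ, rfl⟩,
      Set.subset_inter ((cone_mono Set.inter_subset_left).trans hsub)
        (cone_mono Set.inter_subset_right)⟩
  sUnion_eq := Set.eq_univ_of_forall fun β =>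
    ⟨cone [] Set.univ, ⟨_, _, rfl⟩, β, Set.subset_univ _, wappend_nil β⟩
  eq_generateFrom := rfl

lemma exists_cone_subset_of_wappend_omegaPow_mem {s z w : List Γ} {A : Set Γ}
    (hβ : wappend s (omegaPow z) ∈ cone w A) :
    (∀ c ∈ z, c ∈ A) ∧ ∃ n, cone (s ++ (List.replicate n z).flatten) A ⊆ cone w A := by
  obtain ⟨n, hn⟩ : ∃ n, w.length ≤ (s ++ (List.replicate n z).flatten).length := by
    rcases eq_or_ne z [] with rfl | hz
    · obtain ⟨γ, -, hγ⟩ := hβ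
      have : IsPre w (wappend s (omegaPow [])) := hγ ▸ isPre_wappend w γ
      exact ⟨0, by simpa using List.IsPrefix.length_le this⟩
    · have := Nat.le_mul_of_pos_right w.length (List.length_pos_iff.mpr hz)
      exact ⟨w.length, by simp [List.length_flatten]; omega⟩
  rw [← wappend_flatten_replicate (wappend_omegaPow_self z) n, ← wappend_assoc] at hβ
  obtain ⟨hzA, hsub⟩ := cone_subset_of_wappend_mem hβ hn
  refine ⟨fun c hc => hzA ?_, n, hsub⟩
  rw [← wappend_omegaPow_self z, alph_wappend]
  exact .inl hc

lemma mem_cone_of_isInfProd {u : List Γ} {v : ℕ → List Γ} {α : Word Γ} (hα : IsInfProd u v α) :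
    α ∈ cone u {c | ∃ i, c ∈ v i} := by
  obtain ⟨γ, rfl, hγ⟩ := hα.exists_eq_wappend
  refine ⟨γ, fun c hc => ?_, rfl⟩
  obtain ⟨n, hn⟩ := Set.mem_iUnion.mp (hγ.alph_subset hc)
  exact exists_mem_of_mem_block (by simpa [partialProd_eq_append_block] using hn)

variable {L : Set (Word Γ)}

lemma synLe_refl (u : List Γ) : synLe L u u := fun _ _ _ => ⟨id, id⟩

lemma synLe.trans {u v w : List Γ} (h₁ : synLe L u v) (h₂ : synLe L v w) : synLe L u w :=
  fun x y z => ⟨(h₁ x y z).1 ∘ (h₂ x y z).1, (h₁ x y z).2 ∘ (h₂ x y z).2⟩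

lemma synEq_refl (u : List Γ) : synEq L u u := ⟨synLe_refl u, synLe_refl u⟩

lemma synEq.trans {u v w : List Γ} (h₁ : synEq L u v) (h₂ : synEq L v w) : synEq L u w :=
  ⟨h₁.1.trans h₂.1, h₂.2.trans h₁.2⟩

lemma synLe.append {u u' v v' : List Γ} (hu : synLe L u u') (hv : synLe L v v') :
    synLe L (u ++ v) (u' ++ v') := by
  have rot (x u w : List Γ) :
      wappend x (omegaPow (u ++ w)) = wappend (x ++ u) (omegaPow (w ++ u)) := by
    rw [wappend_assoc, wappend_omegaPow_append]
  intro x y z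
  constructor
  · intro hm
    have := (hv (x ++ u) y z).1 (by simpa using (hu x (v' ++ y) z).1 (by simpa using hm))
    simpa using this
  · intro hm
    have := (hu x (v' ++ y) z).2 (by simpa using hm)
    rw [rot, List.append_assoc] at this
    have := (hv (x ++ u) (y ++ u) z).2 this
    rwa [← List.append_assoc, ← rot, ← List.append_assoc] at this

lemma synEq.append {u u' v v' : List Γ} (hu : synEq L u u') (hv : synEq L v v') :
    synEq L (u ++ v) (u' ++ v') :=
  ⟨hu.1.append hv.1, hu.2.append hv.2⟩

lemma synEq_flatten {l : List (List Γ)} {b : List Γ} (hl : l ≠ []) (hw : ∀ w ∈ l, synEq L w b)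
    (hbb : synEq L (b ++ b) b) : synEq L l.flatten b := by
  induction l with
  | nil => exact absurd rfl hl
  | cons w l ih =>
    rcases eq_or_ne l [] with rfl | hne
    · simpa using hw w (by simp)
    · rw [List.flatten_cons]
      exact ((hw w (by simp)).append (ih hne fun w' hw' => hw w' (by simp [hw']))).trans hbb

lemma synEq_block {v : ℕ → List Γ} {b : List Γ} (hv : ∀ i, synEq L (v i) b)
    (hbb : synEq L (b ++ b) b) {i j : ℕ} (hij : i < j) : synEq L (block v i j) b :=
  synEq_flatten (by simp; omega)
    (fun _ hw => by obtain ⟨k, -, rfl⟩ := List.mem_map.mp hw; exact hv k) hbb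

lemma synEq_partialProd {u a b : List Γ} {v : ℕ → List Γ} (hu : synEq L u a)
    (hv : ∀ i, synEq L (v i) b) (hab : synEq L (a ++ b) a) (n : ℕ) :
    synEq L (partialProd u v n) a := by
  induction n with
  | zero => simpa using hu
  | succ n ih => exact (partialProd_succ u v n ▸ ih.append (hv n)).trans hab

lemma synEq_append_flatten_replicate {s z : List Γ} (hsz : synEq L (s ++ z) s) (n : ℕ) :
    synEq L (s ++ (List.replicate n z).flatten) s := by
  simpa [partialProd, List.map_const'] using
    synEq_partialProd (synEq_refl s) (fun _ => synEq_refl z) hsz n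

lemma InMe.exists_cover {e t : List Γ} (hee : synEq L (e ++ e) e) (ht : InMe L e t) :
    ∃ w, synEq L (e ++ w) e ∧ ∀ c ∈ t, c ∈ w := by
  obtain ⟨parts, rfl, hparts⟩ := ht
  induction parts with
  | nil => exact ⟨[], by simpa using synEq_refl e, by simp⟩
  | cons p parts ih =>
    obtain ⟨x, y, hxy⟩ := hparts p (by simp)
    obtain ⟨w, hw, hcov⟩ := ih fun p' hp' => hparts p' (by simp [hp'])
    refine ⟨x ++ p ++ y ++ w, ?_, fun c hc => ?_⟩
    · rw [← List.append_assoc]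
      exact ((((synEq_refl e).append hxy).trans hee).append (synEq_refl w)).trans hw
    · simp only [List.flatten_cons, List.mem_append] at hc ⊢
      tauto

lemma inMe_of_forall_mem {e r : List Γ} (hr : ∀ c ∈ r, ∃ x y, synEq L (x ++ [c] ++ y) e) :
    InMe L e r :=
  ⟨r.map ([·]), (List.flatMap_singleton' r).symm, by simpa using hr⟩

section Monoid

variable {M : Type} [Monoid M] {h : List Γ → M}

lemma LinkedPair.mul_left {s e : M} (hse : LinkedPair s e) (a : M) : LinkedPair (a * s) e :=
  ⟨by rw [mul_assoc, hse.1], hse.2⟩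

lemma IsHom.map_flatten (hh : IsHom h) (l : List (List Γ)) : h l.flatten = (l.map h).prod := by
  induction l with
  | nil => exact hh.map_one
  | cons w l ih => rw [List.flatten_cons, hh.map_mul, ih, List.map_cons, List.prod_cons]

lemma IsHom.map_block_congr (hh : IsHom h) {v v' : ℕ → List Γ} (hv : ∀ i, h (v i) = h (v' i))
    (i j : ℕ) : h (block v i j) = h (block v' i j) := by
  simp only [block, hh.map_flatten, List.map_map]
  exact congrArg List.prod (List.map_congr_left fun k _ => hv k)

lemma IsHom.map_partialProd (hh : IsHom h) (u : List Γ) (v : ℕ → List Γ) (n : ℕ) :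
    h (partialProd u v n) = h u * h (block v 0 n) := by
  rw [partialProd_eq_append_block, hh.map_mul]

lemma StronglyRecognizes.pairSet_subset (hrec : StronglyRecognizes h L) {s e : M}
    (hse : LinkedPair s e) (hne : (pairSet h s e ∩ L).Nonempty) : pairSet h s e ⊆ L := by
  intro β hβ
  rw [hrec]
  exact Set.mem_iUnion₂.mpr ⟨s, e, Set.mem_iUnion.mpr ⟨⟨hse, hne⟩, hβ⟩⟩

variable [Finite M]

lemma exists_linked_regrouping (hh : IsHom h) (v : ℕ → List Γ) :
    ∃ φ : ℕ → ℕ, StrictMono φ ∧ ∃ e, (∀ j, h (block v (φ j) (φ (j + 1))) = e) ∧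
      LinkedPair (h (block v 0 (φ 0))) e := by
  obtain ⟨ψ, hψ, e, he⟩ := exists_strictMono_forall_lt_eq fun i j => h (block v i j)
  have hidem : e * e = e :=
    calc e * e = h (block v (ψ 0) (ψ 1)) * h (block v (ψ 1) (ψ 2)) := by
          rw [he 0 1 one_pos, he 1 2 one_lt_two]
      _ = h (block v (ψ 0) (ψ 2)) := by
          rw [← hh.map_mul, block_append v (hψ one_pos).le (hψ one_lt_two).le]
      _ = e := he 0 2 two_pos
  refine ⟨fun n => ψ (n + 1), fun a b hab => hψ (by omega), e, fun j => he _ _ (by omega),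
    ?_, hidem⟩
  show h (block v 0 (ψ 1)) * e = h (block v 0 (ψ 1))
  rw [← block_append v (Nat.zero_le _) (hψ one_pos).le, hh.map_mul, he 0 1 one_pos, mul_assoc,
    hidem]

lemma StronglyRecognizes.mem_of_isInfProd (hh : IsHom h)
    (hrec : StronglyRecognizes h L) {u u' : List Γ} {v v' : ℕ → List Γ} {α β : Word Γ}
    (hα : IsInfProd u v α) (hβ : IsInfProd u' v' β) (hu : h u = h u')
    (hv : ∀ i, h (v i) = h (v' i)) (hαL : α ∈ L) : β ∈ L := by
  obtain ⟨φ, hφ, e, he, hlink⟩ := exists_linked_regrouping hh v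
  have hsame : h (partialProd u' v' (φ 0)) = h (partialProd u v (φ 0)) := by
    rw [hh.map_partialProd, hh.map_partialProd, hu, hh.map_block_congr hv]
  refine hrec.pairSet_subset (hh.map_partialProd u v _ ▸ hlink.mul_left (h u))
    ⟨α, ⟨_, _, rfl, he, hα.regroup hφ⟩, hαL⟩
    ⟨_, _, hsame, fun j => (hh.map_block_congr hv _ _).symm.trans (he j), hβ.regroup hφ⟩

lemma synEq_of_map_eq (hh : IsHom h) (hrec : StronglyRecognizes h L) {u v : List Γ}
    (huv : h u = h v) : synEq L u v := by
  have key {u v : List Γ} (huv : h u = h v) : synLe L u v := fun x y z =>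
    ⟨hrec.mem_of_isInfProd hh (isInfProd_omegaPow _ z) (isInfProd_omegaPow _ z)
      (by simp only [hh.map_mul, huv]) fun _ => rfl,
    hrec.mem_of_isInfProd hh (isInfProd_omegaPow x _) (isInfProd_omegaPow x _) rfl
      fun _ => by simp only [hh.map_mul, huv]⟩
  exact ⟨key huv, key huv.symm⟩

lemma exists_isInfProd_of_mem_pairSetSyn (hh : IsHom h) {a b : List Γ}
    (hab : synEq L (a ++ b) a) (hbb : synEq L (b ++ b) b) {β : Word Γ}
    (hβ : β ∈ pairSetSyn L a b) :
    ∃ x y ys, synEq L x a ∧ synEq L y b ∧ (∀ j, h (ys j) = h y) ∧ IsInfProd x ys β := by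
  obtain ⟨u, v, hu, hv, hβ⟩ := hβ
  obtain ⟨φ, hφ, e, he, -⟩ := exists_linked_regrouping hh v
  exact ⟨_, _, _, synEq_partialProd hu hv hab _, synEq_block hv hbb (hφ zero_lt_one),
    fun j => (he j).trans (he 0).symm, hβ.regroup hφ⟩

lemma pairSetSyn_subset (hh : IsHom h) (hrec : StronglyRecognizes h L)
    {a b : List Γ} (hab : synEq L (a ++ b) a) (hbb : synEq L (b ++ b) b)
    (hne : (pairSetSyn L a b ∩ L).Nonempty) : pairSetSyn L a b ⊆ L := by
  obtain ⟨α, hα, hαL⟩ := hne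
  obtain ⟨x', y', ys', hx', hy', hys', hα⟩ := exists_isInfProd_of_mem_pairSetSyn hh hab hbb hα
  intro β hβ
  obtain ⟨x, y, ys, hx, hy, hys, hβ⟩ := exists_isInfProd_of_mem_pairSetSyn hh hab hbb hβ
  have h₁ : wappend x' (omegaPow y') ∈ L :=
    hrec.mem_of_isInfProd hh hα (isInfProd_omegaPow x' y') rfl hys' hαL
  have h₂ : wappend x' (omegaPow y) ∈ L := by
    simpa using ((hy.1.trans hy'.2) x' [] []).2 (by simpa using h₁)
  have h₃ : wappend x (omegaPow y) ∈ L := by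
    simpa using ((hx.1.trans hx'.2) [] [] y).1 (by simpa using h₂)
  exact hrec.mem_of_isInfProd hh (isInfProd_omegaPow x y) hβ rfl (fun j => (hys j).symm) h₃

lemma pairSetSyn_subset_of_isOpen (hh : IsHom h) (hrec : StronglyRecognizes h L)
    (hopen : IsOpen L) {s e t f : List Γ} (hse : synEq L (s ++ e) s)
    (hee : synEq L (e ++ e) e) (htf : synEq L (t ++ f) t) (hff : synEq L (f ++ f) f)
    (ht : InMe L e t) (hf : InMe L e f) (hsub : pairSetSyn L s e ⊆ L) :
    pairSetSyn L (s ++ t) f ⊆ L := by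
  obtain ⟨wt, hwt, hcovt⟩ := ht.exists_cover hee
  obtain ⟨wf, hwf, hcovf⟩ := hf.exists_cover hee
  set z := e ++ wt ++ wf
  have hz : synEq L z e := (hwt.append (synEq_refl wf)).trans hwf
  have hβL : wappend s (omegaPow z) ∈ L :=
    hsub ⟨s, fun _ => z, synEq_refl s, fun _ => hz, isInfProd_omegaPow s z⟩
  obtain ⟨_, ⟨w, A, rfl⟩, hβ, hcone⟩ :=
    isTopologicalBasis_cone.exists_subset_of_mem_open hβL hopen
  obtain ⟨hzA, n, hsubcone⟩ := exists_cone_subset_of_wappend_omegaPow_mem hβ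
  set P := s ++ (List.replicate n z).flatten
  have hP : synEq L P s := synEq_append_flatten_replicate (((synEq_refl s).append hz).trans hse) n
  have htfA : ∀ c ∈ t ++ f, c ∈ A := fun c hc => hzA c <| by
    rcases List.mem_append.mp hc with hc | hc
    · simp [z, hcovt c hc]
    · simp [z, hcovf c hc]
  refine pairSetSyn_subset hh hrec (by simpa using (synEq_refl s).append htf) hff
    ⟨wappend (P ++ t) (omegaPow f),
      ⟨P ++ t, fun _ => f, hP.append (synEq_refl t), fun _ => synEq_refl f,
        isInfProd_omegaPow _ f⟩, hcone (hsubcone ⟨wappend t (omegaPow f), ?_, ?_⟩)⟩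
  · show alph _ ⊆ A
    rw [alph_wappend]
    exact Set.union_subset (fun c hc => htfA c (List.mem_append_left f hc))
      fun c hc => htfA c (List.mem_append_right t (alph_omegaPow_subset f hc))
  · exact (wappend_assoc P t _).symm

lemma exists_inMe_factorization (hh : IsHom h) (hrec : StronglyRecognizes h L) {E : List Γ}
    {γ : Word Γ} (hγ : ∀ c ∈ alph γ, ∃ x y, synEq L (x ++ [c] ++ y) E) (u : List Γ) :
    ∃ t f, synEq L (t ++ f) t ∧ synEq L (f ++ f) f ∧ InMe L E t ∧ InMe L E f ∧
      wappend u γ ∈ pairSetSyn L (u ++ t) f := by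
  have hInMe (r : List Γ) (hr : ∀ c ∈ r, c ∈ alph γ) : InMe L E r :=
    inMe_of_forall_mem fun c hc => hγ c (hr c hc)
  have hblock {i j : ℕ} : ∀ c ∈ block (letterSeq γ) i j, c ∈ alph γ := fun c hc => by
    obtain ⟨k, hk⟩ := exists_mem_of_mem_block hc
    exact mem_alph_of_mem_letterSeq hk
  obtain ⟨φ, hφ, e, he, hlink⟩ := exists_linked_regrouping hh (letterSeq γ)
  set t := partialProd [] (letterSeq γ) (φ 0)
  set f := block (letterSeq γ) (φ 0) (φ 1)
  have ht : h t = h (block (letterSeq γ) 0 (φ 0)) := by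
    rw [hh.map_partialProd, hh.map_one, one_mul]
  have hf : h f = e := he 0
  refine ⟨t, f, synEq_of_map_eq hh hrec ?_, synEq_of_map_eq hh hrec ?_, hInMe t ?_,
    hInMe f hblock, u ++ t, _, synEq_refl _,
    fun j => synEq_of_map_eq hh hrec ((he j).trans hf.symm),
    ((isInfProd_letterSeq γ).regroup hφ).prepend⟩
  · rw [hh.map_mul, ht, hf, hlink.1]
  · rw [hh.map_mul, hf, hlink.2]
  · simpa [t, partialProd_eq_append_block] using hblock

lemma isOpen_of_forall_pairSetSyn_subset (hh : IsHom h) (hrec : StronglyRecognizes h L)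
    (H : ∀ s e t f : List Γ, synEq L (s ++ e) s → synEq L (e ++ e) e →
      synEq L (t ++ f) t → synEq L (f ++ f) f → InMe L e t → InMe L e f →
      pairSetSyn L s e ⊆ L → pairSetSyn L (s ++ t) f ⊆ L) :
    IsOpen L := by
  refine isTopologicalBasis_cone.isOpen_iff.mpr fun α hαL => ?_
  obtain ⟨p, q, ⟨hpq, -⟩, u, v, rfl, hv, hα⟩ :
      ∃ p q, (LinkedPair p q ∧ _) ∧ α ∈ pairSet h p q := by
    have := hrec ▸ hαL
    simpa only [Set.mem_iUnion, exists_prop] using this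
  have hvE (i : ℕ) : synEq L (v i) (v 0) := synEq_of_map_eq hh hrec ((hv i).trans (hv 0).symm)
  have huE : synEq L (u ++ v 0) u := synEq_of_map_eq hh hrec (by rw [hh.map_mul, hv 0, hpq.1])
  have hEE : synEq L (v 0 ++ v 0) (v 0) :=
    synEq_of_map_eq hh hrec (by rw [hh.map_mul, hv 0, hpq.2])
  have hsub : pairSetSyn L u (v 0) ⊆ L :=
    pairSetSyn_subset hh hrec huE hEE ⟨_, ⟨u, v, synEq_refl u, hvE, hα⟩, hαL⟩
  refine ⟨_, ⟨u, _, rfl⟩, mem_cone_of_isInfProd hα, ?_⟩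
  rintro _ ⟨γ, hγ, rfl⟩
  have hletters (c : Γ) (hc : c ∈ alph γ) : ∃ x y, synEq L (x ++ [c] ++ y) (v 0) := by
    obtain ⟨i, hi⟩ := hγ hc
    obtain ⟨x, y, hxy⟩ := List.append_of_mem hi
    exact ⟨x, y, by simpa [hxy] using hvE i⟩
  obtain ⟨t, f, htf, hff, ht, hf, hmem⟩ := exists_inMe_factorization hh hrec hletters u
  exact H u (v 0) t f huE hEE htf hff ht hf hsub hmem

end Monoid

end InfWords

theorem open_iff_algebraic_general (Γ : Type) (L : Set (InfWords.Word Γ))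
    (hreg : InfWords.Regular L) :
    IsOpen L ↔ ∀ s e t f : List Γ,
      InfWords.synEq L (s ++ e) s → InfWords.synEq L (e ++ e) e →
      InfWords.synEq L (t ++ f) t → InfWords.synEq L (f ++ f) f →
      InfWords.InMe L e t → InfWords.InMe L e f →
      InfWords.pairSetSyn L s e ⊆ L → InfWords.pairSetSyn L (s ++ t) f ⊆ L := by
  obtain ⟨M, _, _, h, hh, -, hrec⟩ := hreg
  exact ⟨fun hopen _ _ _ _ => InfWords.pairSetSyn_subset_of_isOpen hh hrec hopen,
    InfWords.isOpen_of_forall_pairSetSyn_subset hh hrec⟩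

theorem open_iff_algebraic (Γ : Type) [Fintype Γ] (L : Set (InfWords.Word Γ))
    (hreg : InfWords.Regular L) :
    IsOpen L ↔ ∀ s e t f : List Γ,
      InfWords.synEq L (s ++ e) s → InfWords.synEq L (e ++ e) e →
      InfWords.synEq L (t ++ f) t → InfWords.synEq L (f ++ f) f →
      InfWords.InMe L e t → InfWords.InMe L e f →
      InfWords.pairSetSyn L s e ⊆ L → InfWords.pairSetSyn L (s ++ t) f ⊆ L :=
  open_iff_algebraic_general Γ L hreg
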